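/- The 2-state protocol with rules (c,c,0)→(c,p,1), (p,p,1)→(p,p,0), (c,p,0)→(c,p,1), started from all nodes in state c and all edges inactive, stabilizes under any fair scheduler to a configuration with exactly one node in state c whose active edges form a spanning star centered at that node. -/
import Mathlib


/-- A network constructor (NET) protocol: an initial node-state and a transition
function taking the states of two interacting nodes and of the edge joining them
to their updated states. -/
structure NET (Q : Type) where
  init : Q
  rule : Q → Q → Bool → Q × Q × Bool

namespace NET

variable {Q : Type}

/-- A configuration on `n` nodes: a node-state for every node and a (symmetrically
stored) Boolean edge-state for every pair of nodes. -/
def Config (Q : Type) (n : ℕ) : Type := (Fin n → Q) × (Fin n → Fin n → Bool)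

/-- One interaction step: the scheduled ordered pair `(u, v)` (if `u ≠ v`) updates
its node-states and the state of the edge `uv` according to the protocol's rule. -/
def step (P : NET Q) {n : ℕ} (C : Config Q n) (u v : Fin n) : Config Q n :=
  if u = v then C
  else
    let r := P.rule (C.1 u) (C.1 v) (C.2 u v || C.2 v u)
    ⟨fun w => if w = u then r.1 else if w = v then r.2.1 else C.1 w,
     fun w x => if (w = u ∧ x = v) ∨ (w = v ∧ x = u) then r.2.2 else C.2 w x⟩

/-- The execution of protocol `P` from configuration `C0` under schedule `sched`. -/
def run (P : NET Q) {n : ℕ} (C0 : Config Q n) (sched : ℕ → Fin n × Fin n) : ℕ → Config Q n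
  | 0 => C0
  | t + 1 => P.step (P.run C0 sched t) (sched t).1 (sched t).2

/-- The initial configuration: every node in the initial state, every edge inactive. -/
def initC (P : NET Q) (n : ℕ) : Config Q n := ⟨fun _ => P.init, fun _ _ => false⟩

/-- Two distinct nodes are adjacent when the edge joining them is active. -/
def adj {n : ℕ} (C : Config Q n) (u v : Fin n) : Prop :=
  u ≠ v ∧ (C.2 u v = true ∨ C.2 v u = true)

open Classical in
/-- The active degree of a node. -/
noncomputable def deg {n : ℕ} (C : Config Q n) (u : Fin n) : ℕ :=
  (Finset.univ.filter (fun v => adj C u v)).card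

/-- The active (output) network is connected. -/
def ConnectedCfg {n : ℕ} (C : Config Q n) : Prop :=
  ∀ u v : Fin n, Relation.ReflTransGen (adj C) u v

/-- The active network is a spanning line: connected, with exactly 2 nodes of
active degree 1 and all remaining nodes of active degree 2. -/
def IsSpanningLine {n : ℕ} (C : Config Q n) : Prop :=
  ConnectedCfg C ∧
    (Finset.univ.filter (fun v => deg C v = 1)).card = 2 ∧
    ∀ v : Fin n, deg C v = 1 ∨ deg C v = 2

/-- The active network is a spanning ring: connected and every node has degree 2. -/
def IsSpanningRing {n : ℕ} (C : Config Q n) : Prop :=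
  ConnectedCfg C ∧ ∀ v : Fin n, deg C v = 2

/-- The active network is a spanning star centered at some node. -/
def IsSpanningStar {n : ℕ} (C : Config Q n) : Prop :=
  ∃ ctr : Fin n, (∀ v : Fin n, adj C ctr v ↔ v ≠ ctr) ∧
    ∀ u v : Fin n, adj C u v → u = ctr ∨ v = ctr

/-- The output (active) network never changes from time `t` on. -/
def outputStableAt (P : NET Q) {n : ℕ} (C0 : Config Q n) (sched : ℕ → Fin n × Fin n)
    (t : ℕ) : Prop :=
  ∀ t', t ≤ t' → ∀ u v : Fin n,
    adj (P.run C0 sched t') u v ↔ adj (P.run C0 sched t) u v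

/-- The running time: the first moment from which the output network stays unchanged. -/
noncomputable def runtime (P : NET Q) {n : ℕ} (C0 : Config Q n)
    (sched : ℕ → Fin n × Fin n) : ℕ :=
  sInf {t | P.outputStableAt C0 sched t}

/-- A schedule is fair if every ordered pair of distinct nodes occurs infinitely often. -/
def Fair {n : ℕ} (sched : ℕ → Fin n × Fin n) : Prop :=
  ∀ p : Fin n × Fin n, p.1 ≠ p.2 → ∀ t, ∃ k, t ≤ k ∧ sched k = p
end NET

/-- Node states of the Global-Star protocol: center `c` and peripheral `p`. -/
inductive St : Type
  | c : St
  | p : St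
deriving DecidableEq

/-- The Global-Star protocol: rules `(c,c,0) → (c,p,1)`, `(p,p,1) → (p,p,0)`,
`(c,p,0) → (c,p,1)`; all other interactions are ineffective. -/
def globalStar : NET St where
  init := St.c
  rule a b e :=
    match a, b, e with
    | St.c, St.c, false => (St.c, St.p, true)
    | St.p, St.p, true => (St.p, St.p, false)
    | St.c, St.p, false => (St.c, St.p, true)
    | St.p, St.c, false => (St.p, St.c, true)
    | a, b, e => (a, b, e)

section StarProof
open NET

instance : Fintype St := ⟨{St.c, St.p}, fun x => by cases x <;> simp⟩

lemma gs_rule_fst : ∀ (a b : St) (e : Bool), (globalStar.rule a b e).1 = a := by decide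
lemma gs_rule_snd_p : ∀ (a : St) (e : Bool), (globalStar.rule a St.p e).2.1 = St.p := by decide
lemma gs_rule_snd_back : ∀ (a b : St) (e : Bool),
    (globalStar.rule a b e).2.1 = St.c → b = St.c := by decide
lemma gs_rule_snd_c : ∀ (a b : St) (e : Bool), b = St.c →
    ((globalStar.rule a b e).2.1 = St.c ∨ a = St.c) := by decide
lemma gs_rule_cc : (globalStar.rule St.c St.c false).2.1 = St.p := by decide
lemma gs_rule_cp_edge : ∀ e, (globalStar.rule St.c St.p e).2.2 = true := by decide
lemma gs_rule_pc_edge : ∀ e, (globalStar.rule St.p St.c e).2.2 = true := by decide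
lemma gs_rule_pp_edge : ∀ e, (globalStar.rule St.p St.p e).2.2 = false := by decide

variable {n : ℕ}

lemma step_eq_self (C : Config St n) (a b : Fin n) (hab : a = b) :
    globalStar.step C a b = C := by simp [NET.step, hab]

lemma step_fst_apply (C : Config St n) (a b : Fin n) (hab : a ≠ b) (w : Fin n) :
    (globalStar.step C a b).1 w =
      if w = a then (globalStar.rule (C.1 a) (C.1 b) (C.2 a b || C.2 b a)).1
      else if w = b then (globalStar.rule (C.1 a) (C.1 b) (C.2 a b || C.2 b a)).2.1
      else C.1 w := by
  simp [NET.step, hab]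

lemma step_snd_apply (C : Config St n) (a b : Fin n) (hab : a ≠ b) (u v : Fin n) :
    (globalStar.step C a b).2 u v =
      if (u = a ∧ v = b) ∨ (u = b ∧ v = a)
        then (globalStar.rule (C.1 a) (C.1 b) (C.2 a b || C.2 b a)).2.2
      else C.2 u v := by
  simp [NET.step, hab]

lemma step_state_a (C : Config St n) (a b : Fin n) :
    (globalStar.step C a b).1 a = C.1 a := by
  by_cases hab : a = b
  · rw [step_eq_self C a b hab]
  · rw [step_fst_apply C a b hab, if_pos rfl, gs_rule_fst]

lemma step_state_b (C : Config St n) (a b : Fin n) (hab : a ≠ b) :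
    (globalStar.step C a b).1 b =
      (globalStar.rule (C.1 a) (C.1 b) (C.2 a b || C.2 b a)).2.1 := by
  rw [step_fst_apply C a b hab, if_neg (fun h => hab h.symm), if_pos rfl]

lemma step_state_other (C : Config St n) (a b w : Fin n) (hwa : w ≠ a) (hwb : w ≠ b) :
    (globalStar.step C a b).1 w = C.1 w := by
  by_cases hab : a = b
  · rw [step_eq_self C a b hab]
  · rw [step_fst_apply C a b hab, if_neg hwa, if_neg hwb]

lemma step_state_p (C : Config St n) (a b w : Fin n) (h : C.1 w = St.p) :
    (globalStar.step C a b).1 w = St.p := by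
  by_cases hab : a = b
  · rw [step_eq_self C a b hab]; exact h
  by_cases hwa : w = a
  · subst hwa; rw [step_state_a]; exact h
  by_cases hwb : w = b
  · rw [hwb] at h; rw [hwb, step_state_b C a b hab, h, gs_rule_snd_p]
  · rw [step_state_other C a b w hwa hwb]; exact h

lemma step_state_back (C : Config St n) (a b w : Fin n)
    (h : (globalStar.step C a b).1 w = St.c) : C.1 w = St.c := by
  by_cases hab : a = b
  · rw [step_eq_self C a b hab] at h; exact h
  by_cases hwa : w = a
  · subst hwa; rw [step_state_a] at h; exact h
  by_cases hwb : w = b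
  · rw [hwb] at h; rw [step_state_b C a b hab] at h; rw [hwb]
    exact gs_rule_snd_back _ _ _ h
  · rw [step_state_other C a b w hwa hwb] at h; exact h

lemma step_exists_c (C : Config St n) (a b : Fin n) (h : ∃ v, C.1 v = St.c) :
    ∃ v, (globalStar.step C a b).1 v = St.c := by
  obtain ⟨v, hv⟩ := h
  by_cases hab : a = b
  · exact ⟨v, by rw [step_eq_self C a b hab]; exact hv⟩
  by_cases hvb : v = b
  · rw [hvb] at hv
    rcases gs_rule_snd_c (C.1 a) (C.1 b) (C.2 a b || C.2 b a) hv with h1 | h1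
    · exact ⟨b, by rw [step_state_b C a b hab]; exact h1⟩
    · exact ⟨a, by rw [step_state_a]; exact h1⟩
  · by_cases hva : v = a
    · subst hva; exact ⟨v, by rw [step_state_a]; exact hv⟩
    · exact ⟨v, by rw [step_state_other C a b v hva hvb]; exact hv⟩

lemma step_edge_diag (C : Config St n) (a b v : Fin n) :
    (globalStar.step C a b).2 v v = C.2 v v := by
  by_cases hab : a = b
  · rw [step_eq_self C a b hab]
  · rw [step_snd_apply C a b hab, if_neg]
    rintro (⟨h1, h2⟩ | ⟨h1, h2⟩)
    · exact hab (h1.symm.trans h2)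
    · exact hab (h2.symm.trans h1)

lemma step_edge_sym (C : Config St n) (a b : Fin n) (h : ∀ u v, C.2 u v = C.2 v u)
    (u v : Fin n) : (globalStar.step C a b).2 u v = (globalStar.step C a b).2 v u := by
  by_cases hab : a = b
  · rw [step_eq_self C a b hab]; exact h u v
  rw [step_snd_apply C a b hab, step_snd_apply C a b hab]
  by_cases htc : (u = a ∧ v = b) ∨ (u = b ∧ v = a)
  · rw [if_pos htc, if_pos (by tauto)]
  · rw [if_neg htc, if_neg (by tauto)]; exact h u v

lemma step_inv (C : Config St n) (a b : Fin n)
    (hC : ∀ u v, C.2 u v = true → C.1 u = St.p ∨ C.1 v = St.p) (u v : Fin n)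
    (h : (globalStar.step C a b).2 u v = true) :
    (globalStar.step C a b).1 u = St.p ∨ (globalStar.step C a b).1 v = St.p := by
  by_cases hab : a = b
  · rw [step_eq_self C a b hab] at h ⊢; exact hC u v h
  rw [step_snd_apply C a b hab] at h
  by_cases htc : (u = a ∧ v = b) ∨ (u = b ∧ v = a)
  · have key : (globalStar.step C a b).1 a = St.p ∨ (globalStar.step C a b).1 b = St.p := by
      rcases hsa : C.1 a with _ | _
      · rcases hsb : C.1 b with _ | _
        · rcases he : (C.2 a b || C.2 b a) with _ | _
          · right
            rw [step_state_b C a b hab, hsa, hsb, he, gs_rule_cc]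
          · exfalso
            rcases Bool.or_eq_true_iff.mp he with h1 | h1
            · rcases hC a b h1 with h2 | h2 <;> simp_all
            · rcases hC b a h1 with h2 | h2 <;> simp_all
        · exact Or.inr (step_state_p C a b b hsb)
      · exact Or.inl (step_state_p C a b a hsa)
    rcases htc with ⟨h1, h2⟩ | ⟨h1, h2⟩
    · subst h1; subst h2; exact key
    · subst h1; subst h2; exact key.symm
  · rw [if_neg htc] at h
    rcases hC u v h with h1 | h1
    · exact Or.inl (step_state_p C a b u h1)
    · exact Or.inr (step_state_p C a b v h1)

lemma step_cc (C : Config St n) (a b : Fin n) (hab : a ≠ b)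
    (ha : C.1 a = St.c) (hb : C.1 b = St.c)
    (e1 : C.2 a b = false) (e2 : C.2 b a = false) :
    (globalStar.step C a b).1 b = St.p := by
  rw [step_state_b C a b hab, ha, hb, e1, e2]
  rfl

lemma step_trigger_cp (C : Config St n) (a b : Fin n) (hab : a ≠ b)
    (ha : C.1 a = St.c) (hb : C.1 b = St.p) :
    (globalStar.step C a b).2 a b = true := by
  rw [step_snd_apply C a b hab, if_pos (Or.inl ⟨rfl, rfl⟩), ha, hb, gs_rule_cp_edge]

lemma step_trigger_pp (C : Config St n) (a b : Fin n) (hab : a ≠ b)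
    (ha : C.1 a = St.p) (hb : C.1 b = St.p) :
    (globalStar.step C a b).2 a b = false := by
  rw [step_snd_apply C a b hab, if_pos (Or.inl ⟨rfl, rfl⟩), ha, hb, gs_rule_pp_edge]

lemma step_persist_cp (C : Config St n) (a b ctr v : Fin n) (hv : v ≠ ctr)
    (hst : ∀ w, C.1 w = if w = ctr then St.c else St.p)
    (h : C.2 ctr v = true) : (globalStar.step C a b).2 ctr v = true := by
  by_cases hab : a = b
  · rw [step_eq_self C a b hab]; exact h
  rw [step_snd_apply C a b hab]
  by_cases htc : (ctr = a ∧ v = b) ∨ (ctr = b ∧ v = a)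
  · rw [if_pos htc]
    rcases htc with ⟨h1, h2⟩ | ⟨h1, h2⟩
    · have ha : C.1 a = St.c := by rw [hst a, if_pos h1.symm]
      have hb : C.1 b = St.p := by
        rw [hst b, if_neg]; rw [← h2]; exact hv
      rw [ha, hb, gs_rule_cp_edge]
    · have ha : C.1 a = St.p := by
        rw [hst a, if_neg]; rw [← h2]; exact hv
      have hb : C.1 b = St.c := by rw [hst b, if_pos h1.symm]
      rw [ha, hb, gs_rule_pc_edge]
  · rw [if_neg htc]; exact h

lemma step_persist_pp (C : Config St n) (a b ctr u v : Fin n)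
    (hu : u ≠ ctr) (hv : v ≠ ctr)
    (hst : ∀ w, C.1 w = if w = ctr then St.c else St.p)
    (h : C.2 u v = false) : (globalStar.step C a b).2 u v = false := by
  by_cases hab : a = b
  · rw [step_eq_self C a b hab]; exact h
  rw [step_snd_apply C a b hab]
  by_cases htc : (u = a ∧ v = b) ∨ (u = b ∧ v = a)
  · rw [if_pos htc]
    have ha : C.1 a = St.p := by
      rw [hst a, if_neg]
      rcases htc with ⟨h1, _⟩ | ⟨_, h2⟩
      · rw [← h1]; exact hu
      · rw [← h2]; exact hv
    have hb : C.1 b = St.p := by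
      rw [hst b, if_neg]
      rcases htc with ⟨_, h2⟩ | ⟨h1, _⟩
      · rw [← h2]; exact hv
      · rw [← h1]; exact hu
    rw [ha, hb, gs_rule_pp_edge]
  · rw [if_neg htc]; exact h
def StarC (n : ℕ) (ctr : Fin n) : NET.Config St n :=
  ⟨fun v => if v = ctr then St.c else St.p,
   fun u v => decide ((u = ctr ∨ v = ctr) ∧ u ≠ v)⟩

lemma star_state (ctr v : Fin n) :
    (StarC n ctr).1 v = if v = ctr then St.c else St.p := rfl

lemma star_edge (ctr u v : Fin n) :
    (StarC n ctr).2 u v = decide ((u = ctr ∨ v = ctr) ∧ u ≠ v) := rfl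

lemma step_noop (C : Config St n) (a b : Fin n)
    (h1 : globalStar.rule (C.1 a) (C.1 b) (C.2 a b || C.2 b a) = (C.1 a, C.1 b, C.2 a b))
    (hsym : C.2 a b = C.2 b a) :
    globalStar.step C a b = C := by
  by_cases hab : a = b
  · exact step_eq_self C a b hab
  refine Prod.ext ?_ ?_
  · funext w
    rw [step_fst_apply C a b hab, h1]
    by_cases hwa : w = a
    · rw [if_pos hwa, hwa]
    by_cases hwb : w = b
    · rw [if_neg hwa, if_pos hwb, hwb]
    · rw [if_neg hwa, if_neg hwb]
  · funext u v
    rw [step_snd_apply C a b hab, h1]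
    by_cases htc : (u = a ∧ v = b) ∨ (u = b ∧ v = a)
    · rw [if_pos htc]
      rcases htc with ⟨h2, h3⟩ | ⟨h2, h3⟩
      · subst h2; subst h3; rfl
      · subst h2; subst h3; exact hsym
    · rw [if_neg htc]

lemma star_fixed (ctr a b : Fin n) :
    globalStar.step (StarC n ctr) a b = StarC n ctr := by
  by_cases hab : a = b
  · exact step_eq_self _ a b hab
  have hab' : ¬ b = a := fun h => hab h.symm
  apply step_noop
  · by_cases ha : a = ctr
    · have hb : b ≠ ctr := fun h => hab (ha.trans h.symm)
      have s1 : (StarC n ctr).1 a = St.c := by rw [star_state, if_pos ha]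
      have s2 : (StarC n ctr).1 b = St.p := by rw [star_state, if_neg hb]
      have e1 : (StarC n ctr).2 a b = true := by
        rw [star_edge, decide_eq_true_iff]; exact ⟨Or.inl ha, hab⟩
      have e2 : (StarC n ctr).2 b a = true := by
        rw [star_edge, decide_eq_true_iff]; exact ⟨Or.inr ha, hab'⟩
      rw [s1, s2, e1, e2]; rfl
    · by_cases hb : b = ctr
      · have s1 : (StarC n ctr).1 a = St.p := by rw [star_state, if_neg ha]
        have s2 : (StarC n ctr).1 b = St.c := by rw [star_state, if_pos hb]
        have e1 : (StarC n ctr).2 a b = true := by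
          rw [star_edge, decide_eq_true_iff]; exact ⟨Or.inr hb, hab⟩
        have e2 : (StarC n ctr).2 b a = true := by
          rw [star_edge, decide_eq_true_iff]; exact ⟨Or.inl hb, hab'⟩
        rw [s1, s2, e1, e2]; rfl
      · have s1 : (StarC n ctr).1 a = St.p := by rw [star_state, if_neg ha]
        have s2 : (StarC n ctr).1 b = St.p := by rw [star_state, if_neg hb]
        have e1 : (StarC n ctr).2 a b = false := by
          rw [star_edge, decide_eq_false_iff_not]
          rintro ⟨h1 | h1, _⟩
          exacts [ha h1, hb h1]
        have e2 : (StarC n ctr).2 b a = false := by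
          rw [star_edge, decide_eq_false_iff_not]
          rintro ⟨h1 | h1, _⟩
          exacts [hb h1, ha h1]
        rw [s1, s2, e1, e2]; rfl
  · rw [star_edge, star_edge]
    apply decide_eq_decide.mpr
    constructor
    · rintro ⟨h1, h2⟩; exact ⟨h1.symm, fun h => h2 h.symm⟩
    · rintro ⟨h1, h2⟩; exact ⟨h1.symm, fun h => h2 h.symm⟩

def gsR (n : ℕ) (sched : ℕ → Fin n × Fin n) : ℕ → NET.Config St n :=
  globalStar.run (globalStar.initC n) sched

lemma gsR_succ (sched : ℕ → Fin n × Fin n) (t : ℕ) :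
    gsR n sched (t + 1) = globalStar.step (gsR n sched t) (sched t).1 (sched t).2 := rfl

variable (sched : ℕ → Fin n × Fin n)

lemma gsR_sym : ∀ t u v, (gsR n sched t).2 u v = (gsR n sched t).2 v u := by
  intro t
  induction t with
  | zero => intro u v; rfl
  | succ t ih => exact step_edge_sym _ _ _ ih

lemma gsR_diag : ∀ t v, (gsR n sched t).2 v v = false := by
  intro t
  induction t with
  | zero => intro v; rfl
  | succ t ih =>
    intro v
    rw [gsR_succ, step_edge_diag]
    exact ih v

lemma gsR_state_back : ∀ {t t' : ℕ}, t ≤ t' → ∀ {v : Fin n},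
    (gsR n sched t').1 v = St.c → (gsR n sched t).1 v = St.c := by
  intro t t' h v
  induction t', h using Nat.le_induction with
  | base => exact id
  | succ s hs ih =>
    intro hc
    exact ih (step_state_back (gsR n sched s) (sched s).1 (sched s).2 v hc)

lemma gsR_exists_c (hn : 1 ≤ n) : ∀ t, ∃ v, (gsR n sched t).1 v = St.c := by
  intro t
  induction t with
  | zero => exact ⟨⟨0, hn⟩, rfl⟩
  | succ t ih => exact step_exists_c _ _ _ ih

lemma gsR_inv : ∀ t u v, (gsR n sched t).2 u v = true →
    (gsR n sched t).1 u = St.p ∨ (gsR n sched t).1 v = St.p := by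
  intro t
  induction t with
  | zero => intro u v h; exact Bool.noConfusion h
  | succ t ih => intro u v h; exact step_inv _ _ _ ih u v h

end StarProof

/-- The 2-state Global-Star protocol, started from all nodes in state `c` and all
edges inactive, stabilizes under any fair scheduler to a configuration with exactly
one node in state `c`, whose active edges form a spanning star centered at it. -/
theorem globalStar_correct (n : ℕ) (hn : 1 ≤ n)
    (sched : ℕ → Fin n × Fin n) (hfair : NET.Fair sched) :
    ∃ t : ℕ,
      (∀ t', t ≤ t' →
        globalStar.run (globalStar.initC n) sched t' =
          globalStar.run (globalStar.initC n) sched t) ∧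
      ∃ ctr : Fin n,
        (globalStar.run (globalStar.initC n) sched t).1 ctr = St.c ∧
        (∀ v : Fin n, v ≠ ctr →
          (globalStar.run (globalStar.initC n) sched t).1 v = St.p) ∧
        (∀ v : Fin n,
          NET.adj (globalStar.run (globalStar.initC n) sched t) ctr v ↔ v ≠ ctr) ∧
        (∀ u v : Fin n,
          NET.adj (globalStar.run (globalStar.initC n) sched t) u v →
            u = ctr ∨ v = ctr) := by
  classical
  have hRdef : globalStar.run (globalStar.initC n) sched = gsR n sched := rfl
  rw [hRdef]
  set S : ℕ → Finset (Fin n) :=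
    fun t => Finset.univ.filter (fun v => (gsR n sched t).1 v = St.c) with hS
  have hmono : ∀ {t t' : ℕ}, t ≤ t' → S t' ⊆ S t := by
    intro t t' h v hv
    simp only [hS, Finset.mem_filter, Finset.mem_univ, true_and] at hv ⊢
    exact gsR_state_back sched h hv
  have hnonempty : ∀ t, (S t).Nonempty := by
    intro t
    obtain ⟨v, hv⟩ := gsR_exists_c sched hn t
    exact ⟨v, by simp [hS, hv]⟩
  obtain ⟨t0, ht0⟩ : sInf (Set.range fun t => (S t).card) ∈ Set.range fun t => (S t).card :=
    Nat.sInf_mem ⟨(S 0).card, 0, rfl⟩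
  have hconst : ∀ t, t0 ≤ t → S t = S t0 := by
    intro t h
    exact Finset.eq_of_subset_of_card_le (hmono h)
      (le_trans (le_of_eq ht0) (Nat.sInf_le ⟨t, rfl⟩))
  obtain ⟨ctr, hctr0⟩ := hnonempty t0
  have hmemc : ∀ t, t0 ≤ t → ∀ w, w ∈ S t → (gsR n sched t).1 w = St.c := by
    intro t ht w hw
    simpa [hS] using hw
  have huniq : ∀ v ∈ S t0, v = ctr := by
    intro v hv
    by_contra hne
    have hcv : ctr ≠ v := fun h => hne h.symm
    obtain ⟨k, hk, hsk⟩ := hfair (ctr, v) hcv t0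
    have hSk := hconst k hk
    have hcc : (gsR n sched k).1 ctr = St.c := hmemc k hk ctr (hSk ▸ hctr0)
    have hvc : (gsR n sched k).1 v = St.c := hmemc k hk v (hSk ▸ hv)
    have e1 : (gsR n sched k).2 ctr v = false := by
      cases he : (gsR n sched k).2 ctr v with
      | false => rfl
      | true =>
        rcases gsR_inv sched k ctr v he with h | h
        · exact absurd (hcc.symm.trans h) (by decide)
        · exact absurd (hvc.symm.trans h) (by decide)
    have e2 : (gsR n sched k).2 v ctr = false := by rw [gsR_sym]; exact e1
    have hstep : (gsR n sched (k + 1)).1 v = St.p := by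
      have hh := step_cc (gsR n sched k) ctr v hcv hcc hvc e1 e2
      rw [gsR_succ, hsk]
      exact hh
    have hv1 : (gsR n sched (k + 1)).1 v = St.c :=
      hmemc (k + 1) (le_trans hk (Nat.le_succ k)) v ((hconst (k + 1) (le_trans hk (Nat.le_succ k))) ▸ hv)
    exact absurd (hv1.symm.trans hstep) (by decide)
  have hGood : ∀ t, t0 ≤ t → ∀ w, (gsR n sched t).1 w = if w = ctr then St.c else St.p := by
    intro t ht w
    by_cases hw : w = ctr
    · rw [if_pos hw, hw]
      exact hmemc t ht ctr ((hconst t ht) ▸ hctr0)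
    · rw [if_neg hw]
      cases hst : (gsR n sched t).1 w with
      | c =>
        have hwS : w ∈ S t := by simp [hS, hst]
        exact absurd (huniq w ((hconst t ht) ▸ hwS)) hw
      | p => rfl
  have hK : ∀ p : Fin n × Fin n, ∃ k, p.1 ≠ p.2 → (t0 ≤ k ∧ sched k = p) := by
    intro p
    by_cases hp : p.1 ≠ p.2
    · obtain ⟨k, hk⟩ := hfair p hp t0
      exact ⟨k, fun _ => hk⟩
    · exact ⟨0, fun h => absurd h hp⟩
  choose K hKs using hK
  set t1 := max t0 (Finset.univ.sup K + 1) with ht1def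
  have ht01 : t0 ≤ t1 := le_max_left _ _
  have hKt1 : ∀ p : Fin n × Fin n, K p + 1 ≤ t1 :=
    fun p => le_trans (Nat.succ_le_succ (Finset.le_sup (Finset.mem_univ p))) (le_max_right _ _)
  have hctrEdge : ∀ v, v ≠ ctr → ∀ t, t1 ≤ t → (gsR n sched t).2 ctr v = true := by
    intro v hv t ht
    obtain ⟨hk0, hksch⟩ := hKs (ctr, v) (fun h => hv h.symm)
    have hall : ∀ s, K (ctr, v) + 1 ≤ s → (gsR n sched s).2 ctr v = true := by
      intro s hs
      induction s, hs using Nat.le_induction with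
      | base =>
        rw [gsR_succ, hksch]
        exact step_trigger_cp _ ctr v (fun h => hv h.symm)
          (by rw [hGood _ hk0 ctr, if_pos rfl])
          (by rw [hGood _ hk0 v, if_neg hv])
      | succ s hs ih =>
        rw [gsR_succ]
        exact step_persist_cp _ _ _ ctr v hv
          (hGood s (le_trans hk0 (le_trans (Nat.le_succ _) hs))) ih
    exact hall t (le_trans (hKt1 (ctr, v)) ht)
  have hppEdge : ∀ u v, u ≠ ctr → v ≠ ctr → u ≠ v → ∀ t, t1 ≤ t →
      (gsR n sched t).2 u v = false := by
    intro u v hu hv huv t ht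
    obtain ⟨hk0, hksch⟩ := hKs (u, v) huv
    have hall : ∀ s, K (u, v) + 1 ≤ s → (gsR n sched s).2 u v = false := by
      intro s hs
      induction s, hs using Nat.le_induction with
      | base =>
        rw [gsR_succ, hksch]
        exact step_trigger_pp _ u v huv
          (by rw [hGood _ hk0 u, if_neg hu])
          (by rw [hGood _ hk0 v, if_neg hv])
      | succ s hs ih =>
        rw [gsR_succ]
        exact step_persist_pp _ _ _ ctr u v hu hv
          (hGood s (le_trans hk0 (le_trans (Nat.le_succ _) hs))) ih
    exact hall t (le_trans (hKt1 (u, v)) ht)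
  have hstar : gsR n sched t1 = StarC n ctr := by
    refine Prod.ext ?_ ?_
    · funext w
      exact hGood t1 ht01 w
    · funext u v
      by_cases huv : u = v
      · subst huv
        rw [gsR_diag, star_edge]
        simp
      by_cases hu : u = ctr
      · have hv : v ≠ ctr := fun h => huv (hu.trans h.symm)
        rw [hu, hctrEdge v hv t1 le_rfl, star_edge]
        symm
        rw [decide_eq_true_iff]
        exact ⟨Or.inl rfl, fun h => huv (hu.trans h)⟩
      by_cases hv : v = ctr
      · rw [hv, gsR_sym, hctrEdge u hu t1 le_rfl, star_edge]
        symm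
        rw [decide_eq_true_iff]
        exact ⟨Or.inr rfl, hu⟩
      · rw [hppEdge u v hu hv huv t1 le_rfl, star_edge]
        symm
        rw [decide_eq_false_iff_not]
        rintro ⟨h1 | h1, _⟩
        exacts [hu h1, hv h1]
  have hfix : ∀ t, t1 ≤ t → gsR n sched t = StarC n ctr := by
    intro t ht
    induction t, ht using Nat.le_induction with
    | base => exact hstar
    | succ s hs ih => rw [gsR_succ, ih, star_fixed]
  refine ⟨t1, ?_, ctr, ?_, ?_, ?_, ?_⟩
  · intro t' ht'
    rw [hfix t' ht', hfix t1 le_rfl]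
  · rw [hfix t1 le_rfl, star_state, if_pos rfl]
  · intro v hv
    rw [hfix t1 le_rfl, star_state, if_neg hv]
  · intro v
    rw [hfix t1 le_rfl]
    constructor
    · rintro ⟨h1, _⟩
      exact fun h => h1 h.symm
    · intro h
      refine ⟨fun h2 => h h2.symm, Or.inl ?_⟩
      rw [star_edge, decide_eq_true_iff]
      exact ⟨Or.inl rfl, fun h2 => h h2.symm⟩
  · intro u v hadj
    rw [hfix t1 le_rfl] at hadj
    obtain ⟨h1, h2 | h2⟩ := hadj
    · rw [star_edge] at h2
      rcases of_decide_eq_true h2 with ⟨h3 | h3, _⟩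
      · exact Or.inl h3
      · exact Or.inr h3
    · rw [star_edge] at h2
      rcases of_decide_eq_true h2 with ⟨h3 | h3, _⟩
      · exact Or.inr h3
      · exact Or.inl h3
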